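/- Let f(x) = (1 − x)/(1 + x) and let x ∈ (0,1) be irrational with OOCF partial quotients (a_n, ε_n) and principal convergents p_n/q_n. Then f(x) is irrational and, for every n ≥ 1, the EICF partial quotients of f(x) satisfy b_n(f(x)) = 2·a_n + ε_n − 1 and η_n(f(x)) = ε_n; moreover the EICF convergents of f(x) satisfy p^E_n(f(x))/q^E_n(f(x)) = (q_n − p_n)/(q_n + p_n) = f(p_n/q_n). -/

import Mathlib

/-- The odd-odd continued fraction map on `[0,1]`.  For `x ∈ [(k-1)/k, k/(k+1))` with `k ≥ 1`
one has `k = ⌊1/(1-x)⌋`, and the two branches are separated by `(2k-1)/(2k+1)`. -/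
noncomputable def oocfT (x : ℝ) : ℝ :=
  if x = 1 then 1
  else if x < (2 * (⌊1 / (1 - x)⌋ : ℝ) - 1) / (2 * (⌊1 / (1 - x)⌋ : ℝ) + 1) then
    ((⌊1 / (1 - x)⌋ : ℝ) * x - ((⌊1 / (1 - x)⌋ : ℝ) - 1)) /
      ((⌊1 / (1 - x)⌋ : ℝ) - ((⌊1 / (1 - x)⌋ : ℝ) + 1) * x)
  else
    ((⌊1 / (1 - x)⌋ : ℝ) - ((⌊1 / (1 - x)⌋ : ℝ) + 1) * x) /
      ((⌊1 / (1 - x)⌋ : ℝ) * x - ((⌊1 / (1 - x)⌋ : ℝ) - 1))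

/-- OOCF partial quotient `a` of a point `y`: `a = k+1` if `y` is in the lower branch
interval `((k-1)/k, (2k-1)/(2k+1))`, and `a = k` if `y ∈ ((2k-1)/(2k+1), k/(k+1))`,
where `k = ⌊1/(1-y)⌋`. -/
noncomputable def oocfA (y : ℝ) : ℤ :=
  if y < (2 * (⌊1 / (1 - y)⌋ : ℝ) - 1) / (2 * (⌊1 / (1 - y)⌋ : ℝ) + 1) then ⌊1 / (1 - y)⌋ + 1
  else ⌊1 / (1 - y)⌋

/-- OOCF partial quotient `ε` of a point `y`: `ε = -1` on the lower branch interval and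
`ε = 1` on the upper one. -/
noncomputable def oocfE (y : ℝ) : ℤ :=
  if y < (2 * (⌊1 / (1 - y)⌋ : ℝ) - 1) / (2 * (⌊1 / (1 - y)⌋ : ℝ) + 1) then -1 else 1

/-- The OOCF convergents `(p'_n, q'_n, p_n, q_n)` of `x`, defined by
`p'_0 = 1, q'_0 = 0, p_0 = 1, q_0 = 1` and
`p'_n = a_n p_{n-1} - p'_{n-1}`, `q'_n = a_n q_{n-1} - q'_{n-1}`,
`p_n = 2 p'_n + ε_n p_{n-1}`, `q_n = 2 q'_n + ε_n q_{n-1}`,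
where `(a_n, ε_n)` are the partial quotients of `x`, i.e. `a_n = oocfA (oocfT^[n-1] x)`,
`ε_n = oocfE (oocfT^[n-1] x)`. -/
noncomputable def oocfConv (x : ℝ) : ℕ → ℤ × ℤ × ℤ × ℤ
  | 0 => (1, 0, 1, 1)
  | n + 1 =>
    let c := oocfConv x n
    (oocfA (oocfT^[n] x) * c.2.2.1 - c.1,
     oocfA (oocfT^[n] x) * c.2.2.2 - c.2.1,
     2 * (oocfA (oocfT^[n] x) * c.2.2.1 - c.1) + oocfE (oocfT^[n] x) * c.2.2.1,
     2 * (oocfA (oocfT^[n] x) * c.2.2.2 - c.2.1) + oocfE (oocfT^[n] x) * c.2.2.2)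

/-- `n`-th sub-convergent numerator `p'_n`. -/
noncomputable def oocfP' (x : ℝ) (n : ℕ) : ℤ := (oocfConv x n).1

/-- `n`-th sub-convergent denominator `q'_n`. -/
noncomputable def oocfQ' (x : ℝ) (n : ℕ) : ℤ := (oocfConv x n).2.1

/-- `n`-th principal convergent numerator `p_n`. -/
noncomputable def oocfP (x : ℝ) (n : ℕ) : ℤ := (oocfConv x n).2.2.1

/-- `n`-th principal convergent denominator `q_n`. -/
noncomputable def oocfQ (x : ℝ) (n : ℕ) : ℤ := (oocfConv x n).2.2.2

/-- `n`-th pseudo-convergent numerator: `p''_n = p'_n + ε_n p_{n-1}` for `n ≥ 1`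
(with the convention `p''_0 = 0`). -/
noncomputable def oocfP'' (x : ℝ) : ℕ → ℤ
  | 0 => 0
  | n + 1 => oocfP' x (n + 1) + oocfE (oocfT^[n] x) * oocfP x n

/-- `n`-th pseudo-convergent denominator: `q''_n = q'_n + ε_n q_{n-1}` for `n ≥ 1`
(with the convention `q''_0 = 1`). -/
noncomputable def oocfQ'' (x : ℝ) : ℕ → ℤ
  | 0 => 1
  | n + 1 => oocfQ' x (n + 1) + oocfE (oocfT^[n] x) * oocfQ x n

/-- The even integer continued fraction map on `[0,1]`: `0 ↦ 0`, and for `k ≥ 1`,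
`x ↦ 1/x - 2k` if `x ∈ [1/(2k+1), 1/(2k)]`, `x ↦ 2k - 1/x` if `x ∈ (1/(2k), 1/(2k-1)]`;
here `k = ⌊(1/x + 1)/2⌋`. -/
noncomputable def eicfT (x : ℝ) : ℝ :=
  if x = 0 then 0
  else if 2 * (⌊(1 / x + 1) / 2⌋ : ℝ) ≤ 1 / x then 1 / x - 2 * (⌊(1 / x + 1) / 2⌋ : ℝ)
  else 2 * (⌊(1 / x + 1) / 2⌋ : ℝ) - 1 / x

/-- EICF partial quotient `b` at a point `z`: `b = 2k` where `k = ⌊(1/z + 1)/2⌋`. -/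
noncomputable def eicfB (z : ℝ) : ℤ := 2 * ⌊(1 / z + 1) / 2⌋

/-- EICF partial quotient `η` at a point `z`: `η = 1` if `z ∈ (1/(2k+1), 1/(2k))`
and `η = -1` if `z ∈ (1/(2k), 1/(2k-1))`. -/
noncomputable def eicfEta (z : ℝ) : ℤ :=
  if 2 * (⌊(1 / z + 1) / 2⌋ : ℝ) < 1 / z then 1 else -1

/-- `η_n` for `n ≥ 0`, with `η_0 = 1` and `η_n = eicfEta (eicfT^[n-1] y)` for `n ≥ 1`. -/
noncomputable def eicfEta0 (y : ℝ) : ℕ → ℤ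
  | 0 => 1
  | n + 1 => eicfEta (eicfT^[n] y)

/-- EICF convergents of `y`, with index shifted by one: `eicfPQ y (n+1) = (p^E_n, q^E_n)`,
so `eicfPQ y 0 = (1, 0)`, `eicfPQ y 1 = (0, 1)` and
`p^E_n = b_n p^E_{n-1} + η_{n-1} p^E_{n-2}`, `q^E_n = b_n q^E_{n-1} + η_{n-1} q^E_{n-2}`. -/
noncomputable def eicfPQ (y : ℝ) : ℕ → ℤ × ℤ
  | 0 => (1, 0)
  | 1 => (0, 1)
  | n + 2 =>
    (eicfB (eicfT^[n] y) * (eicfPQ y (n + 1)).1 + eicfEta0 y n * (eicfPQ y n).1,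
     eicfB (eicfT^[n] y) * (eicfPQ y (n + 1)).2 + eicfEta0 y n * (eicfPQ y n).2)

/-!
The involution `f y = (1 - y) / (1 + y)` conjugates the odd-odd map to the even integer map.
Since `(1 / f y + 1) / 2 = 1 / (1 - y)`, both maps read off the same integer `k = ⌊1 / (1 - y)⌋`
at `y` and at `f y`, and the threshold `(2k - 1)/(2k + 1)` separating the two OOCF branches is
exactly where `1 / f y` crosses `2k`; a direct computation then gives `eicfT ∘ f = f ∘ oocfT` on
the irrationals of `(0, 1)` together with `b = 2a + ε - 1`, `η = ε`. With these partial quotients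
`q_n - p_n` and `q_n + p_n` obey twice the EICF recurrence, so they equal `2 p^E_n` and `2 q^E_n`.
-/

open Set Function

theorem Irrational.linear_div_linear {y : ℝ} (hy : Irrational y) {a b c d : ℚ}
    (hdet : a * d - b * c ≠ 0) : Irrational ((a * y + b) / (c * y + d)) := by
  rintro ⟨q, hq⟩
  have hden : (c : ℝ) * y + d ≠ 0 := by
    intro h
    by_cases hc : c = 0
    · have hd : d = 0 := by simpa [hc] using h
      exact hdet (by simp [hc, hd])
    · exact hy ⟨-d / c, by push_cast; field_simp; linarith⟩
  rw [eq_div_iff hden] at hq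
  by_cases hqc : a - q * c = 0
  · have hb : (b : ℝ) = q * d := by
      have : (a : ℝ) = q * c := by exact_mod_cast sub_eq_zero.mp hqc
      rw [this] at hq
      linarith
    have hb' : b = q * d := by exact_mod_cast hb
    exact hdet (by rw [sub_eq_zero.mp hqc, hb']; ring)
  · have hqc' : (a : ℝ) - q * c ≠ 0 := by exact_mod_cast hqc
    exact hy ⟨(q * d - b) / (a - q * c), by push_cast; field_simp; linarith⟩

lemma one_sub_div_div_one_add_div {K : Type*} [Field K] {a b : K} (hb : b ≠ 0) :
    (1 - a / b) / (1 + a / b) = (b - a) / (b + a) := by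
  rw [one_sub_div hb, one_add_div hb, div_div_div_cancel_right₀ hb]

noncomputable def oocfK (y : ℝ) : ℤ := ⌊1 / (1 - y)⌋

noncomputable def oocfMid (y : ℝ) : ℝ := (2 * (oocfK y : ℝ) - 1) / (2 * oocfK y + 1)

def irrationalsIoo : Set ℝ := {y | y ∈ Ioo 0 1 ∧ Irrational y}

section Pointwise

variable {y : ℝ}

lemma oocfE_of_lt (h : y < oocfMid y) : oocfE y = -1 := if_pos h

lemma oocfE_of_gt (h : oocfMid y < y) : oocfE y = 1 := if_neg h.not_gt

lemma oocfT_of_lt (hy : y ≠ 1) (h : y < oocfMid y) :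
    oocfT y = (oocfK y * y - (oocfK y - 1)) / (oocfK y - (oocfK y + 1) * y) := by
  rw [oocfT, if_neg hy]
  exact if_pos h

lemma oocfT_of_gt (hy : y ≠ 1) (h : oocfMid y < y) :
    oocfT y = (oocfK y - (oocfK y + 1) * y) / (oocfK y * y - (oocfK y - 1)) := by
  rw [oocfT, if_neg hy]
  exact if_neg h.not_gt

lemma two_mul_oocfA_add_oocfE_sub_one (y : ℝ) : 2 * oocfA y + oocfE y - 1 = 2 * oocfK y := by
  unfold oocfA oocfE oocfK
  split_ifs <;> ring

lemma oocfK_nonneg (hy : y < 1) : 0 ≤ oocfK y :=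
  Int.floor_nonneg.mpr (by rw [one_div_nonneg]; linarith)

lemma one_le_oocfK (h0 : 0 ≤ y) (h1 : y < 1) : 1 ≤ oocfK y :=
  Int.le_floor.mpr (by rw [Int.cast_one, le_div_iff₀ (by linarith)]; linarith)

lemma oocf_numerator_pos (hy : y < 1) (hirr : Irrational y) :
    0 < (oocfK y : ℝ) * y - (oocfK y - 1) := by
  have hirr' : Irrational (1 / (1 - y)) := by simpa using (hirr.natCast_sub 1).inv
  have hk : (oocfK y : ℝ) < 1 / (1 - y) := (Int.floor_le _).lt_of_ne (hirr'.ne_int _).symm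
  rw [lt_div_iff₀ (by linarith)] at hk
  linarith

lemma oocf_denominator_pos (hy : y < 1) : 0 < (oocfK y : ℝ) - (oocfK y + 1) * y := by
  have hk : 1 / (1 - y) < (oocfK y : ℝ) + 1 := Int.lt_floor_add_one _
  rw [div_lt_iff₀ (by linarith)] at hk
  linarith

lemma Irrational.ne_oocfMid (hirr : Irrational y) : y ≠ oocfMid y := by
  have h : oocfMid y = ((2 * oocfK y - 1) / (2 * oocfK y + 1) : ℚ) := by
    rw [oocfMid]
    push_cast
    rfl
  exact h ▸ hirr.ne_rat _

lemma two_mul_lt_one_add_div_one_sub_iff {c : ℝ} (hc : 0 ≤ c) (hy : y < 1) :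
    2 * c < (1 + y) / (1 - y) ↔ (2 * c - 1) / (2 * c + 1) < y := by
  rw [lt_div_iff₀ (by linarith), div_lt_iff₀ (by linarith)]
  constructor <;> intro <;> linarith

lemma two_mul_le_one_add_div_one_sub_iff {c : ℝ} (hc : 0 ≤ c) (hy : y < 1) :
    2 * c ≤ (1 + y) / (1 - y) ↔ (2 * c - 1) / (2 * c + 1) ≤ y := by
  rw [le_div_iff₀ (by linarith), div_le_iff₀ (by linarith)]
  constructor <;> intro <;> linarith

lemma floor_eicf_invol (hy : y ≠ 1) : ⌊(1 / ((1 - y) / (1 + y)) + 1) / 2⌋ = oocfK y := by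
  have h : 1 - y ≠ 0 := sub_ne_zero.mpr hy.symm
  rw [oocfK, one_div_div]
  congr 1
  field_simp
  ring

lemma eicfB_invol (hy : y ≠ 1) :
    eicfB ((1 - y) / (1 + y)) = 2 * oocfA y + oocfE y - 1 := by
  rw [eicfB, floor_eicf_invol hy, two_mul_oocfA_add_oocfE_sub_one]

lemma eicfEta_invol (hy : y < 1) (hmid : y ≠ oocfMid y) :
    eicfEta ((1 - y) / (1 + y)) = oocfE y := by
  have hk : (0 : ℝ) ≤ oocfK y := by exact_mod_cast oocfK_nonneg hy
  rw [eicfEta, floor_eicf_invol hy.ne, one_div_div]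
  rcases hmid.lt_or_gt with hlt | hgt
  · rw [if_neg ((two_mul_lt_one_add_div_one_sub_iff hk hy).not.mpr hlt.not_gt), oocfE_of_lt hlt]
  · rw [if_pos ((two_mul_lt_one_add_div_one_sub_iff hk hy).mpr hgt), oocfE_of_gt hgt]

lemma eicfT_invol (hy : y ∈ irrationalsIoo) :
    eicfT ((1 - y) / (1 + y)) = (1 - oocfT y) / (1 + oocfT y) := by
  obtain ⟨⟨h0, h1⟩, hirr⟩ := hy
  have hk : (0 : ℝ) ≤ oocfK y := by exact_mod_cast oocfK_nonneg h1
  have hnum := oocf_numerator_pos h1 hirr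
  have hden := oocf_denominator_pos h1
  have hsub : 1 - y ≠ 0 := by linarith
  rw [eicfT, if_neg (div_pos (by linarith) (by linarith)).ne', floor_eicf_invol h1.ne,
    one_div_div]
  rcases hirr.ne_oocfMid.lt_or_gt with hlt | hgt
  · rw [if_neg ((two_mul_le_one_add_div_one_sub_iff hk h1).not.mpr hlt.not_ge),
      oocfT_of_lt h1.ne hlt, one_sub_div_div_one_add_div hden.ne']
    rw [show (oocfK y : ℝ) - (oocfK y + 1) * y + (oocfK y * y - (oocfK y - 1)) = 1 - y by ring]
    field_simp
    ring
  · rw [if_pos ((two_mul_le_one_add_div_one_sub_iff hk h1).mpr hgt.le), oocfT_of_gt h1.ne hgt,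
      one_sub_div_div_one_add_div hnum.ne']
    rw [show (oocfK y : ℝ) * y - (oocfK y - 1) + (oocfK y - (oocfK y + 1) * y) = 1 - y by ring]
    field_simp
    ring

lemma Irrational.oocfT (hirr : Irrational y) : Irrational (oocfT y) := by
  have hA : Irrational ((oocfK y * y - (oocfK y - 1)) / (oocfK y - (oocfK y + 1) * y)) := by
    convert hirr.linear_div_linear (a := oocfK y) (b := -(oocfK y - 1)) (c := -(oocfK y + 1))
      (d := oocfK y) (by ring_nf; norm_num) using 2 <;> push_cast <;> ring
  rcases hirr.ne_oocfMid.lt_or_gt with hlt | hgt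
  · rwa [oocfT_of_lt hirr.ne_one hlt]
  · rw [oocfT_of_gt hirr.ne_one hgt, ← inv_div]
    exact hA.inv

lemma oocfT_mem_Ioo (hy : y ∈ irrationalsIoo) : oocfT y ∈ Ioo 0 1 := by
  obtain ⟨⟨h0, h1⟩, hirr⟩ := hy
  have hnum := oocf_numerator_pos h1 hirr
  have hden := oocf_denominator_pos h1
  have hk : (0 : ℝ) ≤ oocfK y := by exact_mod_cast oocfK_nonneg h1
  rcases hirr.ne_oocfMid.lt_or_gt with hlt | hgt
  · rw [oocfT_of_lt h1.ne hlt]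
    rw [oocfMid, lt_div_iff₀ (by linarith)] at hlt
    exact ⟨div_pos hnum hden, (div_lt_one hden).mpr (by linarith)⟩
  · rw [oocfT_of_gt h1.ne hgt]
    rw [oocfMid, div_lt_iff₀ (by linarith)] at hgt
    exact ⟨div_pos hden hnum, (div_lt_one hnum).mpr (by linarith)⟩

end Pointwise

lemma mapsTo_oocfT : MapsTo oocfT irrationalsIoo irrationalsIoo :=
  fun _ hy => ⟨oocfT_mem_Ioo hy, hy.2.oocfT⟩

lemma eicfT_iterate_invol {y : ℝ} (hy : y ∈ irrationalsIoo) (n : ℕ) :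
    eicfT^[n] ((1 - y) / (1 + y)) = (1 - oocfT^[n] y) / (1 + oocfT^[n] y) := by
  induction n with
  | zero => rfl
  | succ n ih =>
    rw [iterate_succ_apply', iterate_succ_apply', ih, eicfT_invol (mapsTo_oocfT.iterate n hy)]

section Convergents

variable (x : ℝ) (n : ℕ)

lemma oocfP'_succ : oocfP' x (n + 1) = oocfA (oocfT^[n] x) * oocfP x n - oocfP' x n := rfl

lemma oocfQ'_succ : oocfQ' x (n + 1) = oocfA (oocfT^[n] x) * oocfQ x n - oocfQ' x n := rfl

lemma oocfP_succ : oocfP x (n + 1) = 2 * oocfP' x (n + 1) + oocfE (oocfT^[n] x) * oocfP x n := rfl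

lemma oocfQ_succ : oocfQ x (n + 1) = 2 * oocfQ' x (n + 1) + oocfE (oocfT^[n] x) * oocfQ x n := rfl

end Convergents

lemma oocf_recurrence_eq_two_mul_eicf {a ε b η u u' v : ℕ → ℤ}
    (hu' : ∀ n, u' (n + 1) = a n * u n - u' n) (hu : ∀ n, u (n + 1) = 2 * u' (n + 1) + ε n * u n)
    (hv : ∀ n, v (n + 2) = b n * v (n + 1) + η n * v n)
    (hb : ∀ n, b n = 2 * a n + ε n - 1) (hη : ∀ n, η (n + 1) = ε n)
    (h0 : u 0 = 2 * v 1) (h0' : u' 0 = v 1 - η 0 * v 0) (n : ℕ) :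
    u n = 2 * v (n + 1) ∧ u' n = v (n + 1) - η n * v n := by
  induction n with
  | zero => exact ⟨h0, h0'⟩
  | succ n ih =>
    have h' : u' (n + 1) = v (n + 2) - η (n + 1) * v (n + 1) := by
      rw [hu', hv, hb, hη, ih.1, ih.2]
      ring
    refine ⟨?_, h'⟩
    rw [hu, h', ih.1, hη]
    ring

lemma oocf_eicf_convergents {x y : ℝ}
    (hb : ∀ n, eicfB (eicfT^[n] y) = 2 * oocfA (oocfT^[n] x) + oocfE (oocfT^[n] x) - 1)
    (hη : ∀ n, eicfEta (eicfT^[n] y) = oocfE (oocfT^[n] x)) (n : ℕ) :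
    oocfQ x n - oocfP x n = 2 * (eicfPQ y (n + 1)).1 ∧
      oocfQ x n + oocfP x n = 2 * (eicfPQ y (n + 1)).2 := by
  constructor
  · refine (oocf_recurrence_eq_two_mul_eicf (u := fun n => oocfQ x n - oocfP x n)
      (u' := fun n => oocfQ' x n - oocfP' x n) (v := fun n => (eicfPQ y n).1) (η := eicfEta0 y)
      (fun n => ?_) (fun n => ?_) (fun n => rfl) hb hη rfl rfl n).1 <;>
    simp only [oocfP'_succ, oocfQ'_succ, oocfP_succ, oocfQ_succ] <;> ring
  · refine (oocf_recurrence_eq_two_mul_eicf (u := fun n => oocfQ x n + oocfP x n)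
      (u' := fun n => oocfQ' x n + oocfP' x n) (v := fun n => (eicfPQ y n).2) (η := eicfEta0 y)
      (fun n => ?_) (fun n => ?_) (fun n => rfl) hb hη rfl rfl n).1 <;>
    simp only [oocfP'_succ, oocfQ'_succ, oocfP_succ, oocfQ_succ] <;> ring

lemma oocfA_oocfE_cases {y : ℝ} (h0 : 0 ≤ y) (h1 : y < 1) :
    (oocfE y = 1 ∧ 1 ≤ oocfA y) ∨ (oocfE y = -1 ∧ 2 ≤ oocfA y) := by
  have hk := one_le_oocfK h0 h1
  unfold oocfA oocfE
  split_ifs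
  · exact Or.inr ⟨rfl, by unfold oocfK at hk; omega⟩
  · exact Or.inl ⟨rfl, hk⟩

lemma one_le_oocfQ {x : ℝ} (hx : ∀ n, oocfT^[n] x ∈ Ioo 0 1) (n : ℕ) : 1 ≤ oocfQ x n := by
  suffices 0 ≤ oocfQ' x n ∧ oocfQ' x n ≤ oocfQ x n ∧ 1 ≤ oocfQ x n from this.2.2
  induction n with
  | zero => exact ⟨le_rfl, zero_le_one, le_rfl⟩
  | succ n ih =>
    rw [oocfQ_succ, oocfQ'_succ]
    rcases oocfA_oocfE_cases (hx n).1.le (hx n).2 with ⟨hε, ha⟩ | ⟨hε, ha⟩ <;>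
      rw [hε] <;> refine ⟨?_, ?_, ?_⟩ <;> nlinarith

/-- Correspondence between the OOCF of `x` and the EICF of `f(x) = (1-x)/(1+x)`:
`f(x)` is irrational and for every `n ≥ 1` the EICF partial quotients of `f(x)` are
`b_n = 2 a_n + ε_n - 1`, `η_n = ε_n`, and the EICF convergents of `f(x)` satisfy
`p^E_n / q^E_n = (q_n - p_n)/(q_n + p_n) = f(p_n/q_n)`
(recall `eicfPQ y (n+1) = (p^E_n, q^E_n)`). -/
theorem eicf_of_invol_oocf
    (x : ℝ) (hx : x ∈ Set.Ioo (0 : ℝ) 1) (hirr : Irrational x) :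
    Irrational ((1 - x) / (1 + x)) ∧
      ∀ n : ℕ, 1 ≤ n →
        eicfB (eicfT^[n - 1] ((1 - x) / (1 + x))) =
            2 * oocfA (oocfT^[n - 1] x) + oocfE (oocfT^[n - 1] x) - 1 ∧
          eicfEta (eicfT^[n - 1] ((1 - x) / (1 + x))) = oocfE (oocfT^[n - 1] x) ∧
          ((eicfPQ ((1 - x) / (1 + x)) (n + 1)).1 : ℝ) /
              ((eicfPQ ((1 - x) / (1 + x)) (n + 1)).2 : ℝ) =
            ((oocfQ x n : ℝ) - (oocfP x n : ℝ)) / ((oocfQ x n : ℝ) + (oocfP x n : ℝ)) ∧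
          ((oocfQ x n : ℝ) - (oocfP x n : ℝ)) / ((oocfQ x n : ℝ) + (oocfP x n : ℝ)) =
            (1 - (oocfP x n : ℝ) / (oocfQ x n : ℝ)) /
              (1 + (oocfP x n : ℝ) / (oocfQ x n : ℝ)) := by
  have horbit n : oocfT^[n] x ∈ irrationalsIoo := mapsTo_oocfT.iterate n ⟨hx, hirr⟩
  have hb n : eicfB (eicfT^[n] ((1 - x) / (1 + x))) =
      2 * oocfA (oocfT^[n] x) + oocfE (oocfT^[n] x) - 1 := by
    rw [eicfT_iterate_invol ⟨hx, hirr⟩, eicfB_invol (horbit n).1.2.ne]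
  have hη n : eicfEta (eicfT^[n] ((1 - x) / (1 + x))) = oocfE (oocfT^[n] x) := by
    rw [eicfT_iterate_invol ⟨hx, hirr⟩, eicfEta_invol (horbit n).1.2 (horbit n).2.ne_oocfMid]
  refine ⟨?_, fun n _ => ⟨hb _, hη _, ?_, ?_⟩⟩
  · convert hirr.linear_div_linear (a := -1) (b := 1) (c := 1) (d := 1) (by norm_num) using 2 <;>
      push_cast <;> ring
  · obtain ⟨hnum, hden⟩ := oocf_eicf_convergents hb hη n
    rw [← Int.cast_sub, ← Int.cast_add, hnum, hden]
    push_cast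
    exact (mul_div_mul_left _ _ two_ne_zero).symm
  · have hq : (0 : ℝ) < oocfQ x n := by
      exact_mod_cast zero_lt_one.trans_le (one_le_oocfQ (fun n => (horbit n).1) n)
    rw [one_sub_div_div_one_add_div hq.ne']
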